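/- Let F be a field, d >= 1, and work in the free associative F-algebra on 2d generators y_1,...,y_d, z_1,...,z_d. Let HARD_d be the noncommutative polynomial that is the sum, over all subsets S of {1,...,d}, of the word formed by the product of the y_i for i in S in increasing order of i, followed by the product of the z_j for j in the complement of S in increasing order of j. Then the sum over k = 0,...,d of the ranks over F of the matrices M_k(HARD_d) is at least 2^d. -/

import Mathlib

/-- The coefficient of a noncommutative polynomial (element of the free associative algebra)
at a word, via the identification with the monoid algebra of the free monoid. -/
noncomputable def ncCoeff {F : Type*} [CommSemiring F] {X : Type*}
    (x : FreeAlgebra F X) (w : FreeMonoid X) : F :=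
  (FreeAlgebra.equivMonoidAlgebraFreeMonoid x).coeff w

/-- Nisan's hard polynomial `HARD_d`: the ordered representative of `∏ i, (y_i + z_i)`,
i.e. the sum over all subsets `S ⊆ {1,…,d}` of the product of the `y_i, i ∈ S` in
increasing order followed by the product of the `z_j, j ∈ Sᶜ` in increasing order
(with `y` the left copy and `z` the right copy of `Fin d`). -/
noncomputable def HARD (F : Type*) [Field F] (d : ℕ) : FreeAlgebra F (Fin d ⊕ Fin d) :=
  ∑ S : Finset (Fin d),
    ((S.sort (· ≤ ·)).map (fun i => FreeAlgebra.ι F (Sum.inl i : Fin d ⊕ Fin d))).prod *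
      ((Sᶜ.sort (· ≤ ·)).map (fun j => FreeAlgebra.ι F (Sum.inr j : Fin d ⊕ Fin d))).prod

/-- Nisan's partial derivatives matrix `M_k(HARD_d)`: rows indexed by words of length `k`
over the `2d` generators, columns by words of length `d - k`, with `(u,v)` entry the
coefficient of the concatenated word `u * v` in `HARD_d`. -/
noncomputable def nisanMatrix (F : Type*) [Field F] (d k : ℕ) :
    Matrix (List.Vector (Fin d ⊕ Fin d) k) (List.Vector (Fin d ⊕ Fin d) (d - k)) F :=
  fun u v => ncCoeff (HARD F d) (FreeMonoid.ofList u.toList * FreeMonoid.ofList v.toList)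

/-!
Write the monomial of `HARD_d` indexed by `S ⊆ [d]` as the ordered `y`-word of `S` followed by the
ordered `z`-word of `Sᶜ`. A word of this shape determines both of its halves, so the coefficient of
`y_A z_C` in `HARD_d` is `1` if `C = Aᶜ` and `0` otherwise. Hence in `M_k(HARD_d)` the rows `y_A`
and columns `z_{Bᶜ}` with `|A| = |B| = k` form an identity submatrix, so
`rank M_k(HARD_d) ≥ C(d, k)`, and summing over `k` gives `2^d`.
-/

open FreeAlgebra in
theorem FreeAlgebra.equivMonoidAlgebraFreeMonoid_list_prod_map_ι {R X : Type*} [CommSemiring R]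
    (l : List X) :
    equivMonoidAlgebraFreeMonoid ((l.map (ι R)).prod) =
      MonoidAlgebra.single (FreeMonoid.ofList l) 1 := by
  induction l with
  | nil => simp [MonoidAlgebra.one_def]
  | cons x l ih =>
    rw [List.map_cons, List.prod_cons, map_mul, ih]
    simp [equivMonoidAlgebraFreeMonoid, MonoidAlgebra.single_mul_single, FreeMonoid.ofList_cons]

section OrderedWord

variable {α : Type*} [LinearOrder α]

def orderedWord (A C : Finset α) : List (α ⊕ α) :=
  (A.sort (· ≤ ·)).map Sum.inl ++ (C.sort (· ≤ ·)).map Sum.inr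

theorem orderedWord_inj {A C A' C' : Finset α} :
    orderedWord A C = orderedWord A' C' ↔ A = A' ∧ C = C' := by
  refine ⟨fun h => ?_, by rintro ⟨rfl, rfl⟩; rfl⟩
  have hl := congrArg (fun w => (w.filterMap Sum.getLeft?).toFinset) h
  have hr := congrArg (fun w => (w.filterMap Sum.getRight?).toFinset) h
  simpa [orderedWord, List.filterMap_map, Function.comp_def] using And.intro hl hr

end OrderedWord

theorem HARD_eq_sum_orderedWord (F : Type*) [Field F] (d : ℕ) :
    HARD F d = ∑ S : Finset (Fin d), ((orderedWord S Sᶜ).map (FreeAlgebra.ι F)).prod := by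
  simp only [HARD, orderedWord, List.map_append, List.prod_append, List.map_map]
  rfl

theorem ncCoeff_HARD_orderedWord (F : Type*) [Field F] {d : ℕ} (A C : Finset (Fin d)) :
    ncCoeff (HARD F d) (FreeMonoid.ofList (orderedWord A C)) = if Aᶜ = C then 1 else 0 := by
  classical
  simp only [ncCoeff, HARD_eq_sum_orderedWord, map_sum,
    FreeAlgebra.equivMonoidAlgebraFreeMonoid_list_prod_map_ι, MonoidAlgebra.coeff_sum,
    MonoidAlgebra.coeff_single, Finsupp.coe_finsetSum, Finset.sum_apply, Finsupp.single_apply,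
    EmbeddingLike.apply_eq_iff_eq, orderedWord_inj, Finset.sum_boole]
  split_ifs with h
  · simp [← h, Finset.filter_eq']
  · rw [Finset.card_eq_zero.mpr (Finset.filter_eq_empty_iff.mpr ?_), Nat.cast_zero]
    rintro S - ⟨rfl, hS⟩
    exact h hS

theorem choose_le_rank_nisanMatrix (F : Type*) [Field F] (d k : ℕ) :
    d.choose k ≤ (nisanMatrix F d k).rank := by
  let ι := {A : Finset (Fin d) // A.card = k}
  let yWord (A : ι) : List.Vector (Fin d ⊕ Fin d) k :=
    ⟨(A.1.sort (· ≤ ·)).map Sum.inl, by simp [A.2]⟩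
  let zWord (A : ι) : List.Vector (Fin d ⊕ Fin d) (d - k) :=
    ⟨(A.1ᶜ.sort (· ≤ ·)).map Sum.inr, by simp [Finset.card_compl, A.2]⟩
  have hId : (nisanMatrix F d k).submatrix yWord zWord = 1 := by
    ext A B
    rw [Matrix.submatrix_apply, Matrix.one_apply, nisanMatrix, ← FreeMonoid.ofList_append]
    exact (ncCoeff_HARD_orderedWord F A.1 B.1ᶜ).trans
      (by simp only [compl_inj_iff, Subtype.val_inj])
  calc d.choose k = Fintype.card ι := by simp [ι, Fintype.card_finset_len]
    _ = ((nisanMatrix F d k).submatrix yWord zWord).rank := by rw [hId, Matrix.rank_one]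
    _ ≤ (nisanMatrix F d k).rank := Matrix.rank_submatrix_le _ _ _

theorem sum_nisanMatrix_rank_ge_general (F : Type*) [Field F] (d : ℕ) :
    2 ^ d ≤ ∑ k ∈ Finset.range (d + 1), (nisanMatrix F d k).rank :=
  calc 2 ^ d = ∑ k ∈ Finset.range (d + 1), d.choose k := (Nat.sum_range_choose d).symm
    _ ≤ ∑ k ∈ Finset.range (d + 1), (nisanMatrix F d k).rank :=
      Finset.sum_le_sum fun k _ => choose_le_rank_nisanMatrix F d k

/-- The sum over `k = 0,…,d` of the ranks of Nisan's matrices `M_k(HARD_d)` is at least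
`2^d` (whence, by Nisan's theorem, every noncommutative formula computing `HARD_d` — in
particular every ordered formula computing `∏ i, (y_i + z_i)` — has size at least `2^d`). -/
theorem sum_nisanMatrix_rank_ge (F : Type*) [Field F] (d : ℕ) (hd : 1 ≤ d) :
    2 ^ d ≤ ∑ k ∈ Finset.range (d + 1), (nisanMatrix F d k).rank :=
  sum_nisanMatrix_rank_ge_general F d
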